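/- Let q_w ≥ 1, q_p ≥ 0 and n ≥ 0 be natural numbers. The real vector space of functions f : [0, n+1] → ℝ that are (q_w − 1)-times continuously differentiable on [0, n+1] and agree with a polynomial of degree ≤ q_w + q_p on each interval [j, j+1] for j = 0, …, n has dimension (q_w + q_p + 1) + n·(q_p + 1). -/

import Mathlib

/-!
A spline is determined by its piece `p` on `[0, 1]` and by the differences of consecutive pieces.
Comparing iterated derivatives from both sides of the knot `j + 1` shows that
`C^(q_w - 1)`-smoothness makes such a difference divisible by `(X - (j + 1)) ^ q_w`, i.e. equal to
`(X - (j + 1)) ^ q_w * r j` with `deg r j ≤ q_p`. Conversely, for any such data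
`x ↦ p x + ∑ j, (x - (j + 1))₊ ^ q_w * r j x` is a spline; on `[m, m + 1]` it is the polynomial
`p + ∑ j < m, (X - (j + 1)) ^ q_w * r j`, so it vanishes only for zero data. Hence the spline space
is isomorphic to `ℝ[X]_(q_w + q_p + 1) × (Fin n → ℝ[X]_(q_p + 1))`.
-/

open Polynomial Set Filter Topology

noncomputable def truncPow (a : ℝ) (k : ℕ) (x : ℝ) : ℝ := max (x - a) 0 ^ k

lemma truncPow_of_le {a x : ℝ} (k : ℕ) (h : a ≤ x) : truncPow a k x = (x - a) ^ k := by
  rw [truncPow, max_eq_left (sub_nonneg.2 h)]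

lemma truncPow_of_ge {a x : ℝ} {k : ℕ} (hk : k ≠ 0) (h : x ≤ a) : truncPow a k x = 0 := by
  rw [truncPow, max_eq_right (sub_nonpos.2 h), zero_pow hk]

lemma hasDerivAt_max_zero_pow (k : ℕ) (x : ℝ) :
    HasDerivAt (fun y : ℝ => max y 0 ^ (k + 2)) ((k + 2) * max x 0 ^ (k + 1)) x := by
  refine hasDerivAt_of_hasDerivAt_of_ne' (f := fun y : ℝ => max y 0 ^ (k + 2))
    (g := fun y : ℝ => (k + 2) * max y 0 ^ (k + 1)) (x := 0) (fun y hy => ?_)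
    (by fun_prop) (by fun_prop) x
  rcases hy.lt_or_gt with hy | hy
  · have hzero : (fun _ : ℝ => (0 : ℝ)) =ᶠ[𝓝 y] fun z => max z 0 ^ (k + 2) := by
      filter_upwards [Iio_mem_nhds hy] with z hz
      rw [max_eq_right (le_of_lt hz), zero_pow (by omega)]
    rw [max_eq_right hy.le, zero_pow (by omega), mul_zero]
    exact (hasDerivAt_const y 0).congr_of_eventuallyEq hzero.symm
  · have hpow : (fun z : ℝ => z ^ (k + 2)) =ᶠ[𝓝 y] fun z => max z 0 ^ (k + 2) := by
      filter_upwards [Ioi_mem_nhds hy] with z hz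
      rw [max_eq_left (le_of_lt hz)]
    rw [max_eq_left hy.le]
    convert (hasDerivAt_pow (k + 2) y).congr_of_eventuallyEq hpow.symm using 1
    push_cast
    ring

lemma contDiff_max_zero_pow (k : ℕ) : ContDiff ℝ k (fun y : ℝ => max y 0 ^ (k + 1)) := by
  induction k with
  | zero => exact contDiff_zero.2 (by fun_prop)
  | succ k ih =>
    rw [Nat.cast_succ, contDiff_succ_iff_deriv]
    refine ⟨fun x => (hasDerivAt_max_zero_pow k x).differentiableAt, by simp, ?_⟩
    rw [funext fun x => (hasDerivAt_max_zero_pow k x).deriv]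
    exact contDiff_const.mul ih

lemma contDiff_truncPow (a : ℝ) (k : ℕ) : ContDiff ℝ k (truncPow a (k + 1)) :=
  (contDiff_max_zero_pow k).comp (contDiff_id.sub contDiff_const)

section IteratedDeriv

variable {𝕜 : Type*} [NontriviallyNormedField 𝕜]

lemma Polynomial.contDiff_eval (p : 𝕜[X]) (n : WithTop ℕ∞) :
    ContDiff 𝕜 n fun x => p.eval x := by
  simpa using p.contDiff_aeval (𝕜 := 𝕜) n

lemma Polynomial.iteratedDeriv_eval (p : 𝕜[X]) (i : ℕ) :
    iteratedDeriv i (fun x => p.eval x) = fun x => (derivative^[i] p).eval x := by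
  induction i generalizing p with
  | zero => simp
  | succ i ih =>
    have hderiv : _root_.deriv (fun x => p.eval x) = fun x => p.derivative.eval x := by
      funext x
      exact p.deriv
    rw [iteratedDeriv_succ', hderiv, ih]
    rfl

lemma iteratedDerivWithin_eq_iterate_derivative_eval {f : 𝕜 → 𝕜} {s t : Set 𝕜} {k i : ℕ}
    {p : 𝕜[X]} {x : 𝕜} (hs : UniqueDiffOn 𝕜 s) (hf : ContDiffOn 𝕜 k f s) (ht : UniqueDiffOn 𝕜 t)
    (hts : t ⊆ s) (hp : EqOn f (fun x => p.eval x) t) (hi : i ≤ k) (hx : x ∈ t) :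
    iteratedDerivWithin i f s x = (derivative^[i] p).eval x :=
  calc iteratedDerivWithin i f s x = iteratedDerivWithin i f t x := by
        simp only [iteratedDerivWithin_eq_iteratedFDerivWithin,
          iteratedFDerivWithin_subset hts ht hs (hf.of_le (by exact_mod_cast hi)) hx]
    _ = iteratedDerivWithin i (fun x => p.eval x) t x := iteratedDerivWithin_congr hp hx
    _ = iteratedDeriv i (fun x => p.eval x) x :=
        iteratedDerivWithin_eq_iteratedDeriv ht (p.contDiff_eval i).contDiffAt hx
    _ = (derivative^[i] p).eval x := by rw [p.iteratedDeriv_eval]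

theorem X_sub_C_pow_dvd_sub_of_contDiffOn [CharZero 𝕜] {f : 𝕜 → 𝕜} {s t₁ t₂ : Set 𝕜} {k : ℕ}
    {p q : 𝕜[X]} {b : 𝕜} (hs : UniqueDiffOn 𝕜 s) (hf : ContDiffOn 𝕜 k f s)
    (ht₁ : UniqueDiffOn 𝕜 t₁) (ht₂ : UniqueDiffOn 𝕜 t₂) (ht₁s : t₁ ⊆ s) (ht₂s : t₂ ⊆ s)
    (hp : EqOn f (fun x => p.eval x) t₁) (hq : EqOn f (fun x => q.eval x) t₂)
    (hb₁ : b ∈ t₁) (hb₂ : b ∈ t₂) :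
    (X - C b) ^ (k + 1) ∣ q - p := by
  rcases eq_or_ne (q - p) 0 with h0 | h0
  · simp [h0]
  rw [← le_rootMultiplicity_iff h0]
  refine lt_rootMultiplicity_of_isRoot_iterate_derivative h0 fun i hi => ?_
  rw [iterate_derivative_sub, IsRoot, eval_sub,
    ← iteratedDerivWithin_eq_iterate_derivative_eval hs hf ht₂ ht₂s hq hi hb₂,
    ← iteratedDerivWithin_eq_iterate_derivative_eval hs hf ht₁ ht₁s hp hi hb₁, sub_self]

end IteratedDeriv

lemma exists_nat_le_mem_Icc {n : ℕ} {x : ℝ} (hx : x ∈ Icc (0 : ℝ) (n + 1)) :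
    ∃ m ≤ n, x ∈ Icc (m : ℝ) (m + 1) := by
  rcases le_or_gt x n with h | h
  · exact ⟨⌊x⌋₊, Nat.floor_le_of_le h, Nat.floor_le hx.1, (Nat.lt_floor_add_one x).le⟩
  · exact ⟨n, le_rfl, h.le, hx.2⟩

section Spline

variable {n : ℕ}

noncomputable def splineFun (k : ℕ) (p : ℝ[X]) (r : Fin n → ℝ[X]) (x : ℝ) : ℝ :=
  p.eval x + ∑ j : Fin n, truncPow (j + 1) k x * (r j).eval x

noncomputable def splinePiece (k : ℕ) (p : ℝ[X]) (r : Fin n → ℝ[X]) (m : ℕ) : ℝ[X] :=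
  p + ∑ j ∈ Finset.univ.filter (fun j : Fin n => (j : ℕ) < m), (X - C ((j : ℝ) + 1)) ^ k * r j

lemma contDiff_splineFun (k : ℕ) (p : ℝ[X]) (r : Fin n → ℝ[X]) :
    ContDiff ℝ k (splineFun (k + 1) p r) :=
  (p.contDiff_eval k).add <|
    ContDiff.sum fun j _ => (contDiff_truncPow _ k).mul ((r j).contDiff_eval k)

variable {k : ℕ} {p : ℝ[X]} {r : Fin n → ℝ[X]}

lemma splineFun_eq_eval_splinePiece (hk : k ≠ 0) {m : ℕ} {x : ℝ}
    (hx : x ∈ Icc (m : ℝ) (m + 1)) : splineFun k p r x = (splinePiece k p r m).eval x := by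
  simp only [splineFun, splinePiece, eval_add, eval_finsetSum, eval_mul, eval_pow, eval_sub,
    eval_X, eval_C]
  rw [Finset.sum_filter]
  congr 1
  refine Finset.sum_congr rfl fun j _ => ?_
  split_ifs with hj
  · rw [truncPow_of_le k ((by exact_mod_cast hj : (j : ℝ) + 1 ≤ m).trans hx.1)]
  · have hmj : (m : ℝ) ≤ j := by exact_mod_cast not_lt.1 hj
    rw [truncPow_of_ge hk (by linarith [hx.2]), zero_mul]

@[simp]
lemma splinePiece_zero : splinePiece k p r 0 = p := by
  simp [splinePiece]

lemma splinePiece_succ (j : Fin n) :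
    splinePiece k p r (j + 1) = splinePiece k p r j + (X - C ((j : ℝ) + 1)) ^ k * r j := by
  have hfilter : (Finset.univ.filter fun i : Fin n => (i : ℕ) < j + 1) =
      insert j (Finset.univ.filter fun i : Fin n => (i : ℕ) < j) := by
    ext i
    simp only [Finset.mem_filter, Finset.mem_univ, true_and, Finset.mem_insert, Fin.ext_iff]
    omega
  rw [splinePiece, splinePiece, hfilter, Finset.sum_insert (by simp), add_comm _ (∑ i ∈ _, _),
    add_assoc]

lemma natDegree_splinePiece_le {d m : ℕ} (hp : p.natDegree ≤ k + d)
    (hr : ∀ j, (r j).natDegree ≤ d) : (splinePiece k p r m).natDegree ≤ k + d := by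
  refine natDegree_add_le_of_degree_le hp (natDegree_sum_le_of_forall_le _ _ fun j _ => ?_)
  refine (natDegree_mul_le).trans (add_le_add ((natDegree_pow_le).trans ?_) (hr j))
  rw [natDegree_X_sub_C, mul_one]

lemma eq_zero_of_splineFun_eqOn_zero (hk : k ≠ 0)
    (h : EqOn (splineFun k p r) 0 (Icc 0 (n + 1))) : p = 0 ∧ r = 0 := by
  have hpiece : ∀ m ≤ n, splinePiece k p r m = 0 := fun m hm =>
    eq_zero_of_infinite_isRoot _ <| (Icc_infinite (lt_add_one (m : ℝ))).mono fun x hx => by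
      rw [mem_ofPred_eq, IsRoot, ← splineFun_eq_eval_splinePiece hk hx]
      exact h ⟨(Nat.cast_nonneg m).trans hx.1,
        hx.2.trans (by exact_mod_cast Nat.add_le_add_right hm 1)⟩
  refine ⟨by simpa using hpiece 0 n.zero_le, funext fun j => ?_⟩
  have hjump := splinePiece_succ (k := k) (p := p) (r := r) j
  rw [hpiece _ j.2, hpiece _ j.2.le, zero_add, eq_comm, mul_eq_zero] at hjump
  exact hjump.resolve_left (pow_ne_zero _ (X_sub_C_ne_zero _))

lemma exists_splineFun_eqOn {d : ℕ} {f : ℝ → ℝ} (hf : ContDiffOn ℝ k f (Icc 0 (n + 1)))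
    (hpieces : ∀ j ≤ n, ∃ P : ℝ[X], P.natDegree ≤ k + 1 + d ∧
      ∀ x ∈ Icc (j : ℝ) (j + 1), f x = P.eval x) :
    ∃ (p : ℝ[X]) (r : Fin n → ℝ[X]), p.natDegree ≤ k + 1 + d ∧ (∀ j, (r j).natDegree ≤ d) ∧
      EqOn f (splineFun (k + 1) p r) (Icc 0 (n + 1)) := by
  choose! P hPdeg hP using hpieces
  have hjump (j : Fin n) : (X - C ((j : ℝ) + 1)) ^ (k + 1) ∣ P (j + 1) - P j := by
    have hj : (j : ℝ) + 1 ≤ n := by exact_mod_cast j.2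
    have hright : EqOn f (fun x => (P (j + 1)).eval x) (Icc ((j : ℝ) + 1) (j + 1 + 1)) := by
      have := hP (j + 1) j.2
      push_cast at this
      exact this
    exact X_sub_C_pow_dvd_sub_of_contDiffOn (uniqueDiffOn_Icc (by positivity)) hf
      (uniqueDiffOn_Icc (lt_add_one _)) (uniqueDiffOn_Icc (lt_add_one _))
      (Icc_subset_Icc (Nat.cast_nonneg _) (by linarith))
      (Icc_subset_Icc (by positivity) (by linarith))
      (hP j j.2.le) hright ⟨by linarith, le_rfl⟩ ⟨le_rfl, by linarith⟩
  choose r hr using hjump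
  have hrdeg (j : Fin n) : (r j).natDegree ≤ d := by
    rcases eq_or_ne (r j) 0 with h0 | h0
    · simp [h0]
    have hdeg := (natDegree_sub_le _ _).trans (max_le (hPdeg _ j.2) (hPdeg _ j.2.le))
    rw [hr j, ((monic_X_sub_C _).pow _).natDegree_mul' h0, natDegree_pow, natDegree_X_sub_C]
      at hdeg
    omega
  have hpiece : ∀ m ≤ n, splinePiece (k + 1) (P 0) r m = P m := by
    intro m hm
    induction m with
    | zero => exact splinePiece_zero
    | succ m ih =>
      rw [splinePiece_succ (j := ⟨m, hm⟩), ih (by omega), ← hr]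
      ring
  refine ⟨P 0, r, hPdeg 0 n.zero_le, hrdeg, fun x hx => ?_⟩
  obtain ⟨m, hm, hxm⟩ := exists_nat_le_mem_Icc hx
  rw [splineFun_eq_eval_splinePiece k.succ_ne_zero hxm, hpiece m hm, hP m hm x hxm]

end Spline

lemma Polynomial.mem_degreeLT_succ_iff {R : Type*} [Semiring R] {p : R[X]} {d : ℕ} :
    p ∈ degreeLT R (d + 1) ↔ p.natDegree ≤ d := by
  rw [degreeLT_succ_eq_degreeLE, mem_degreeLE, natDegree_le_iff_degree_le]

noncomputable def splineMap (k d n : ℕ) :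
    degreeLT ℝ (k + d + 1) × (Fin n → degreeLT ℝ (d + 1)) →ₗ[ℝ] (Icc (0 : ℝ) (n + 1) → ℝ) where
  toFun pr x := splineFun k pr.1 (fun j => pr.2 j) x
  map_add' pr pr' := by
    funext x
    simp only [splineFun, Prod.fst_add, Prod.snd_add, Pi.add_apply, Submodule.coe_add, eval_add,
      mul_add, Finset.sum_add_distrib]
    ring
  map_smul' c pr := by
    funext x
    simp [splineFun, mul_add, Finset.mul_sum, mul_left_comm]

lemma splineMap_injective {k d n : ℕ} (hk : k ≠ 0) : Function.Injective (splineMap k d n) := by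
  rw [← LinearMap.ker_eq_bot, LinearMap.ker_eq_bot']
  rintro ⟨p, r⟩ h
  obtain ⟨hp, hr⟩ := eq_zero_of_splineFun_eqOn_zero hk fun x hx => congrFun h ⟨x, hx⟩
  exact Prod.ext (Subtype.ext hp) (funext fun j => Subtype.ext (congrFun hr j))

lemma mem_range_splineMap_iff {k d n : ℕ} {g : Icc (0 : ℝ) (n + 1) → ℝ} :
    g ∈ LinearMap.range (splineMap (k + 1) d n) ↔ ∃ f : ℝ → ℝ,
      ContDiffOn ℝ k f (Icc 0 (n + 1)) ∧
      (∀ j ≤ n, ∃ P : ℝ[X], P.natDegree ≤ k + 1 + d ∧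
        ∀ x ∈ Icc (j : ℝ) (j + 1), f x = P.eval x) ∧
      ∀ x : Icc (0 : ℝ) (n + 1), g x = f x := by
  constructor
  · rintro ⟨⟨p, r⟩, rfl⟩
    refine ⟨splineFun (k + 1) p (fun j => r j), (contDiff_splineFun k _ _).contDiffOn,
      fun j _ => ⟨_, natDegree_splinePiece_le (m := j) (mem_degreeLT_succ_iff.1 p.2)
        (fun j => mem_degreeLT_succ_iff.1 (r j).2),
        fun x hx => splineFun_eq_eval_splinePiece k.succ_ne_zero hx⟩, fun x => rfl⟩
  · rintro ⟨f, hf, hpieces, hg⟩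
    obtain ⟨p, r, hp, hr, hfr⟩ := exists_splineFun_eqOn hf hpieces
    exact ⟨(⟨p, mem_degreeLT_succ_iff.2 hp⟩, fun j => ⟨r j, mem_degreeLT_succ_iff.2 (hr j)⟩),
      funext fun x => ((hg x).trans (hfr x.2)).symm⟩

/-- The spline space `S^{q_w+q_p, q_w-1}` on `[0, n+1]` with inner knots `1, …, n`,
realised as a submodule of the functions on `[0, n+1]` admitting an extension that is
`C^{q_w-1}` on `[0, n+1]` and agrees with a polynomial of degree `≤ q_w + q_p` on each
interval `[j, j+1]`, `j = 0, …, n`, has dimension `(q_w + q_p + 1) + n·(q_p + 1)`. -/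
theorem spline_space_dimension (q_w q_p n : ℕ) (hqw : 1 ≤ q_w)
    (S : Submodule ℝ (Set.Icc (0 : ℝ) ((n : ℝ) + 1) → ℝ))
    (hS : ∀ g : Set.Icc (0 : ℝ) ((n : ℝ) + 1) → ℝ,
      g ∈ S ↔ ∃ f : ℝ → ℝ,
        ContDiffOn ℝ (q_w - 1 : ℕ) f (Set.Icc (0 : ℝ) ((n : ℝ) + 1)) ∧
        (∀ j : ℕ, j ≤ n → ∃ p : Polynomial ℝ, p.natDegree ≤ q_w + q_p ∧
          ∀ ξ ∈ Set.Icc (j : ℝ) ((j : ℝ) + 1), f ξ = p.eval ξ) ∧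
        ∀ x : Set.Icc (0 : ℝ) ((n : ℝ) + 1), g x = f (x : ℝ)) :
    Module.finrank ℝ S = (q_w + q_p + 1) + n * (q_p + 1) := by
  obtain ⟨k, rfl⟩ : ∃ k, q_w = k + 1 := ⟨q_w - 1, by omega⟩
  have hrange : LinearMap.range (splineMap (k + 1) q_p n) = S := by
    ext g
    rw [hS, mem_range_splineMap_iff, Nat.add_sub_cancel]
  rw [← hrange, LinearMap.finrank_range_of_inj (splineMap_injective k.succ_ne_zero),
    Module.finrank_prod, Module.finrank_pi_fintype]
  simp [LinearEquiv.finrank_eq (degreeLTEquiv ℝ _)]
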